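/- Let F : ℝ → ℝ be differentiable at 0 with F(0) = 0, let α > 1, and let P_n be a sequence of positive reals with P_n → 0 and n · P_n → 0, satisfying P_n = G_n(P_n)·[α + F(P_n)]^{-n} where G_n(P_n) → R₀ > 0. Then lim_{n→∞} ln(P_n · α^n) = ln R₀, i.e., P_n · α^n → R₀. -/

import Mathlib

open Filter Real Asymptotics

theorem stmt_5 (α R₀ : ℝ) (hα : 1 < α) (hR : 0 < R₀)
    (F : ℝ → ℝ) (hF : DifferentiableAt ℝ F 0) (hF0 : F 0 = 0)
    (P g : ℕ → ℝ) (hPpos : ∀ n : ℕ, 0 < P n)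
    (hP0 : Filter.Tendsto P Filter.atTop (nhds 0))
    (hnP : Filter.Tendsto (fun n : ℕ => (n : ℝ) * P n) Filter.atTop (nhds 0))
    (hg : Filter.Tendsto g Filter.atTop (nhds R₀))
    (hpos : ∀ᶠ n in Filter.atTop, 0 < α + F (P n))
    (heq : ∀ᶠ n in Filter.atTop, P n = g n / (α + F (P n)) ^ n) :
    Filter.Tendsto (fun n => P n * α ^ n) Filter.atTop (nhds R₀) := by
  have hα0 : (0:ℝ) < α := lt_trans one_pos hα
  set c := deriv F 0 with hc
  have hFd : HasDerivAt F c 0 := hF.hasDerivAt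
  have habs : Tendsto (fun n : ℕ => |(n : ℝ) * P n|) atTop (nhds 0) := by
    have := hnP.abs; simpa using this
  -- F (P n) → 0
  have hFP0 : Tendsto (fun n => F (P n)) atTop (nhds 0) := by
    have h := hF.continuousAt.tendsto
    rw [hF0] at h
    exact h.comp hP0
  -- n * F (P n) → 0
  have hnF : Tendsto (fun n : ℕ => (n : ℝ) * F (P n)) atTop (nhds 0) := by
    have h1 : (fun x => F x - F 0 - (x - 0) • c) =o[nhds 0] (fun x => x - 0) :=
      hasDerivAt_iff_isLittleO.mp hFd
    have h2 : (fun n => F (P n) - c * P n) =o[atTop] P := by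
      have := h1.comp_tendsto hP0
      simpa [hF0, mul_comm, Function.comp_def] using this
    have hb := h2.bound one_pos
    have h3 : Tendsto (fun n : ℕ => (n : ℝ) * (F (P n) - c * P n)) atTop (nhds 0) := by
      refine squeeze_zero_norm' (a := fun n : ℕ => |(n : ℝ) * P n|) ?_ habs
      filter_upwards [hb] with n hn
      have : ‖(n : ℝ) * (F (P n) - c * P n)‖ = (n : ℝ) * ‖F (P n) - c * P n‖ := by
        rw [norm_mul]; simp
      rw [this, abs_mul, abs_of_nonneg (Nat.cast_nonneg n : (0:ℝ) ≤ n)]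
      exact mul_le_mul_of_nonneg_left (by simpa using hn) (Nat.cast_nonneg n)
    have h4 : Tendsto (fun n : ℕ => c * ((n : ℝ) * P n)) atTop (nhds 0) := by
      simpa using hnP.const_mul c
    have := h3.add h4
    simp only [add_zero] at this
    refine this.congr (fun n => by ring)
  -- the normalized base a n
  set a : ℕ → ℝ := fun n => 1 + F (P n) / α with ha
  have haT : Tendsto a atTop (nhds 1) := by
    have := (hFP0.div_const α).const_add 1
    simpa [ha] using this
  have hapos : ∀ᶠ n in atTop, 0 < a n := by
    filter_upwards [hpos] with n hn
    have : a n = (α + F (P n)) / α := by simp only [ha]; rw [add_div, div_self hα0.ne']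
    rw [this]; positivity
  -- n * log (a n) → 0
  have hnlog : Tendsto (fun n : ℕ => (n : ℝ) * Real.log (a n)) atTop (nhds 0) := by
    have hld : HasDerivAt Real.log 1 1 := by
      simpa using Real.hasDerivAt_log one_ne_zero
    have h1 : (fun x => Real.log x - Real.log 1 - (x - 1) • (1:ℝ)) =o[nhds 1]
        (fun x => x - 1) := hasDerivAt_iff_isLittleO.mp hld
    have h2 : (fun n => Real.log (a n) - (a n - 1)) =o[atTop] (fun n => a n - 1) := by
      have := h1.comp_tendsto haT
      simpa [Function.comp_def] using this
    have hb := h2.bound one_pos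
    have hnF' : Tendsto (fun n : ℕ => (n : ℝ) * (a n - 1)) atTop (nhds 0) := by
      have := hnF.div_const α
      simp only [zero_div] at this
      refine this.congr (fun n => by simp [ha]; ring)
    have habs' : Tendsto (fun n : ℕ => |(n : ℝ) * (a n - 1)|) atTop (nhds 0) := by
      have := hnF'.abs; simpa using this
    have h3 : Tendsto (fun n : ℕ => (n : ℝ) * (Real.log (a n) - (a n - 1))) atTop (nhds 0) := by
      refine squeeze_zero_norm' (a := fun n : ℕ => |(n : ℝ) * (a n - 1)|) ?_ habs'
      filter_upwards [hb] with n hn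
      rw [norm_mul, abs_mul]
      exact mul_le_mul_of_nonneg_left (by simpa using hn)
        (by simpa using (Nat.cast_nonneg n : (0:ℝ) ≤ n))
    have := h3.add hnF'
    simp only [add_zero] at this
    refine this.congr (fun n => by ring)
  -- a n ^ n → 1
  have hapow : Tendsto (fun n : ℕ => a n ^ n) atTop (nhds 1) := by
    have hexp : Tendsto (fun n : ℕ => Real.exp ((n : ℝ) * Real.log (a n))) atTop (nhds 1) := by
      have := Real.continuous_exp.continuousAt.tendsto.comp hnlog
      simpa [Function.comp_def] using this
    refine hexp.congr' ?_
    filter_upwards [hapos] with n hn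
    rw [Real.exp_nat_mul, Real.exp_log hn]
  -- conclusion
  have hfinal : Tendsto (fun n : ℕ => g n / a n ^ n) atTop (nhds R₀) := by
    have := hg.div hapow one_ne_zero
    rw [div_one] at this; exact this
  refine hfinal.congr' ?_
  filter_upwards [heq, hpos] with n hn hp
  have hane : a n = (α + F (P n)) / α := by simp only [ha]; rw [add_div, div_self hα0.ne']
  rw [hn, hane, div_pow, div_div_eq_mul_div, div_mul_eq_mul_div, mul_comm (g n) (α ^ n),
    mul_div_assoc, mul_comm]
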